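/- arXiv:2503.13516 — 2 statements merged into one kernel-verified Lean document; each statement's English description precedes it below -/
import Mathlib

section
/- Let a, b, γ_c, s_e, d_e, α_n, k_n, g, γ_e, s_n, d_n be positive real parameters with a > γ_c·s_e/d_e. Define f₁(T) = (1/(d_e + γ_e·T))·(s_e + α_n·k_n·s_n·T/(d_n·(T+g) + k_n·T)) and f₂(T) = a·(1 − b·T)/γ_c. Then the function f(T) = f₁(T) − f₂(T) satisfies f(0) < 0 and f(1/b) > 0, and hence there exists T* ∈ (0, 1/b) with f(T*) = 0. -/
/-! A steady state is a crossing of the effector nullcline `f₁` with the tumour nullcline `f₂`.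
The line `f₂` falls from `a / γc` at `T = 0` to `0` at the carrying capacity `T = 1 / b`, while
`f₁` starts at `se / de < a / γc` and stays positive; since `f₁` is continuous on `T ≥ 0`, the
intermediate value theorem yields a crossing in between. -/

open Set

namespace TumorImmune

variable (se de γe αn kn sn dn g : ℝ)

noncomputable def effectorNullcline (T : ℝ) : ℝ :=
  (1 / (de + γe * T)) * (se + αn * kn * sn * T / (dn * (T + g) + kn * T))

noncomputable def tumorNullcline (a b γc T : ℝ) : ℝ := a * (1 - b * T) / γc

theorem effectorNullcline_zero : effectorNullcline se de γe αn kn sn dn g 0 = se / de := by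
  simp [effectorNullcline, div_eq_inv_mul]

variable {se de γe αn kn sn dn g}

theorem continuousOn_effectorNullcline (hde : 0 < de) (hγe : 0 ≤ γe) (hdn : 0 < dn) (hg : 0 < g)
    (hkn : 0 ≤ kn) : ContinuousOn (effectorNullcline se de γe αn kn sn dn g) (Ici 0) := by
  refine ContinuousOn.mul ?_ (continuousOn_const.add ?_)
  · exact continuousOn_const.div (by fun_prop) fun T (hT : 0 ≤ T) => by positivity
  · exact (by fun_prop : Continuous _).continuousOn.div (by fun_prop)
      fun T (hT : 0 ≤ T) => (by positivity : 0 < dn * (T + g) + kn * T).ne'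

theorem effectorNullcline_pos (hse : 0 < se) (hde : 0 < de) (hγe : 0 ≤ γe) (hαn : 0 ≤ αn)
    (hkn : 0 ≤ kn) (hsn : 0 ≤ sn) (hdn : 0 < dn) (hg : 0 < g) {T : ℝ} (hT : 0 ≤ T) :
    0 < effectorNullcline se de γe αn kn sn dn g T := by
  unfold effectorNullcline
  positivity

theorem tumorNullcline_zero (a b γc : ℝ) : tumorNullcline a b γc 0 = a / γc := by
  simp [tumorNullcline]

theorem tumorNullcline_inv {b : ℝ} (hb : b ≠ 0) (a γc : ℝ) : tumorNullcline a b γc b⁻¹ = 0 := by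
  simp [tumorNullcline, hb]

end TumorImmune

open TumorImmune in
theorem stmt_0_general (a b γc se de αn kn g γe sn dn : ℝ)
    (hb : 0 < b) (hγc : 0 < γc) (hse : 0 < se) (hde : 0 < de)
    (hαn : 0 < αn) (hkn : 0 < kn) (hg : 0 < g) (hγe : 0 < γe) (hsn : 0 < sn) (hdn : 0 < dn)
    (hgrow : a > γc * se / de)
    (f₁ : ℝ → ℝ)
    (hf₁ : ∀ T, f₁ T = (1 / (de + γe * T)) * (se + αn * kn * sn * T / (dn * (T + g) + kn * T)))
    (f₂ : ℝ → ℝ) (hf₂ : ∀ T, f₂ T = a * (1 - b * T) / γc)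
    (f : ℝ → ℝ) (hf : ∀ T, f T = f₁ T - f₂ T) :
    f 0 < 0 ∧ f (1 / b) > 0 ∧ ∃ T' ∈ Set.Ioo 0 (1 / b), f T' = 0 := by
  have hf_eq : f = effectorNullcline se de γe αn kn sn dn g - tumorNullcline a b γc := by
    funext T
    rw [hf, hf₁, hf₂]
    rfl
  have hf_zero : f 0 < 0 := by
    rw [hf_eq, Pi.sub_apply, effectorNullcline_zero, tumorNullcline_zero, sub_neg,
      div_lt_div_iff₀ hde hγc]
    rwa [gt_iff_lt, div_lt_iff₀ hde, mul_comm γc] at hgrow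
  have hf_capacity : f (1 / b) > 0 := by
    rw [hf_eq, Pi.sub_apply, one_div, tumorNullcline_inv hb.ne', sub_zero]
    exact effectorNullcline_pos hse hde hγe.le hαn.le hkn.le hsn.le hdn hg (by positivity)
  have hcont : ContinuousOn f (Icc 0 (1 / b)) := by
    rw [hf_eq]
    refine ((continuousOn_effectorNullcline hde hγe.le hdn hg hkn.le).mono Icc_subset_Ici_self).sub ?_
    unfold tumorNullcline
    fun_prop
  exact ⟨hf_zero, hf_capacity,
    intermediate_value_Ioo (by positivity) hcont ⟨hf_zero, hf_capacity⟩⟩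

theorem stmt_0 (a b γc se de αn kn g γe sn dn : ℝ)
    (ha : 0 < a) (hb : 0 < b) (hγc : 0 < γc) (hse : 0 < se) (hde : 0 < de)
    (hαn : 0 < αn) (hkn : 0 < kn) (hg : 0 < g) (hγe : 0 < γe) (hsn : 0 < sn) (hdn : 0 < dn)
    (hgrow : a > γc * se / de)
    (f₁ : ℝ → ℝ)
    (hf₁ : ∀ T, f₁ T = (1 / (de + γe * T)) * (se + αn * kn * sn * T / (dn * (T + g) + kn * T)))
    (f₂ : ℝ → ℝ) (hf₂ : ∀ T, f₂ T = a * (1 - b * T) / γc)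
    (f : ℝ → ℝ) (hf : ∀ T, f T = f₁ T - f₂ T) :
    f 0 < 0 ∧ f (1 / b) > 0 ∧ ∃ T' ∈ Set.Ioo 0 (1 / b), f T' = 0 :=
  stmt_0_general a b γc se de αn kn g γe sn dn hb hγc hse hde hαn hkn hg hγe hsn hdn hgrow f₁ hf₁ f₂
    hf₂ f hf
end

section
/- Let a, b, γ_c, s_e, d_e, α_n, k_n, g, γ_e, s_n, d_n be positive reals with a > γ_c·s_e/d_e. Suppose for every T ∈ [0, 1/b] we have ((T + β₁)² − (β₁² + β₃ − β₁·β₂))/(T² + β₂·T + β₃)² ≤ β₄·a·b/γ_c (with β₁,…,β₄ as defined from the parameters). Then the equation f₁(T) = a(1 − bT)/γ_c has exactly one solution T* in the interval (0, 1/b), where f₁(T) = (1/β₄)·(T + β₁)/(T² + β₂·T + β₃). -/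
/-!
The gap `f(T) = f₁(T) - a(1 - bT)/γ_c` has derivative `ab/γ_c - N(T)/(β₄ D(T)²)`, where
`N(T)/D(T)²` is the quotient bounded in the hypothesis, so `f` is monotone on `[0, 1/b]`.
It is negative at `0` (this is `a > γ_c s_e/d_e`) and positive at `1/b`, so it has a zero in
`(0, 1/b)`. Clearing denominators, every zero is a root of a cubic that does not vanish at `1/b`;
a monotone function with finitely many zeros cannot vanish at two points, since it would vanish
on the whole interval between them.
-/

open Set Polynomial

theorem existsUnique_mem_Ioo_eq_zero_of_monotoneOn {f : ℝ → ℝ} {p q : ℝ} (hpq : p ≤ q)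
    (hcont : ContinuousOn f (Icc p q)) (hmono : MonotoneOn f (Icc p q))
    (hp : f p < 0) (hq : 0 < f q) (hfin : {t ∈ Icc p q | f t = 0}.Finite) :
    ∃! t, t ∈ Ioo p q ∧ f t = 0 := by
  obtain ⟨t, ht, hft⟩ := intermediate_value_Ioo hpq hcont ⟨hp, hq⟩
  have not_lt : ∀ x z, x ∈ Ioo p q → z ∈ Ioo p q → f x = 0 → f z = 0 → ¬x < z := by
    intro x z hx hz hfx hfz hxz
    refine (Icc_infinite hxz) (hfin.subset fun u hu => ?_)
    have hxI : x ∈ Icc p q := Ioo_subset_Icc_self hx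
    have hzI : z ∈ Icc p q := Ioo_subset_Icc_self hz
    have huI : u ∈ Icc p q := ⟨hxI.1.trans hu.1, hu.2.trans hzI.2⟩
    have hxu := hmono hxI huI hu.1
    have huz := hmono huI hzI hu.2
    exact ⟨huI, le_antisymm (hfz ▸ huz) (hfx ▸ hxu)⟩
  refine ⟨t, ⟨ht, hft⟩, fun s ⟨hs, hfs⟩ => ?_⟩
  by_contra hne
  rcases lt_or_gt_of_ne hne with hst | hts
  · exact not_lt s t hs ht hfs hft hst
  · exact not_lt t s ht hs hft hfs hts

/-- The function `f = f₁ - a(1 - bT)/γ_c` of the paper. -/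
noncomputable def steadyStateGap (β₁ β₂ β₃ β₄ a b γc T : ℝ) : ℝ :=
  (1 / β₄) * (T + β₁) / (T ^ 2 + β₂ * T + β₃) - a * (1 - b * T) / γc

section SteadyStateGap

variable {β₁ β₂ β₃ β₄ a b γc : ℝ}

theorem hasDerivAt_steadyStateGap {T : ℝ} (hD : T ^ 2 + β₂ * T + β₃ ≠ 0) :
    HasDerivAt (steadyStateGap β₁ β₂ β₃ β₄ a b γc)
      (a * b / γc - 1 / β₄ *
        (((T + β₁) ^ 2 - (β₁ ^ 2 + β₃ - β₁ * β₂)) / (T ^ 2 + β₂ * T + β₃) ^ 2)) T := by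
  have hnum : HasDerivAt (fun T : ℝ => 1 / β₄ * (T + β₁)) (1 / β₄) T := by
    simpa using ((hasDerivAt_id T).add_const β₁).const_mul (1 / β₄)
  have hden : HasDerivAt (fun T : ℝ => T ^ 2 + β₂ * T + β₃) (2 * T + β₂) T := by
    simpa [mul_comm] using
      ((hasDerivAt_pow 2 T).add ((hasDerivAt_id T).const_mul β₂)).add_const β₃
  have hlin : HasDerivAt (fun T : ℝ => a * (1 - b * T) / γc) (-(a * b / γc)) T := by
    simpa [mul_comm, neg_div] using
      ((((hasDerivAt_id T).const_mul b).const_sub 1).const_mul a).div_const γc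
  refine ((hnum.fun_div hden hD).fun_sub hlin).congr_deriv ?_
  field_simp
  ring

theorem continuousOn_steadyStateGap (hβ₂ : 0 ≤ β₂) (hβ₃ : 0 < β₃) :
    ContinuousOn (steadyStateGap β₁ β₂ β₃ β₄ a b γc) (Ici 0) := fun T hT =>
  (hasDerivAt_steadyStateGap (by have : (0 : ℝ) ≤ T := hT; positivity)).continuousAt
    |>.continuousWithinAt

theorem monotoneOn_steadyStateGap (hβ₂ : 0 ≤ β₂) (hβ₃ : 0 < β₃) (hβ₄ : 0 < β₄)
    (hΔ : ∀ T ∈ Icc (0 : ℝ) (1 / b),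
      ((T + β₁) ^ 2 - (β₁ ^ 2 + β₃ - β₁ * β₂)) / (T ^ 2 + β₂ * T + β₃) ^ 2
        ≤ β₄ * (a * b / γc)) :
    MonotoneOn (steadyStateGap β₁ β₂ β₃ β₄ a b γc) (Icc 0 (1 / b)) := by
  refine monotoneOn_of_hasDerivWithinAt_nonneg (f' := fun T => a * b / γc - 1 / β₄ *
      (((T + β₁) ^ 2 - (β₁ ^ 2 + β₃ - β₁ * β₂)) / (T ^ 2 + β₂ * T + β₃) ^ 2)) (convex_Icc _ _)
    ((continuousOn_steadyStateGap hβ₂ hβ₃).mono Icc_subset_Ici_self)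
    (fun T hT => ?_) (fun T hT => ?_)
  · rw [interior_Icc] at hT
    have : (0 : ℝ) ≤ T := hT.1.le
    exact (hasDerivAt_steadyStateGap (by positivity)).hasDerivWithinAt
  · rw [interior_Icc] at hT
    refine sub_nonneg.2 ?_
    rw [one_div_mul_eq_div, div_le_iff₀' hβ₄]
    exact hΔ T (Ioo_subset_Icc_self hT)

theorem steadyStateGap_eq_zero_iff {T : ℝ} (hD : T ^ 2 + β₂ * T + β₃ ≠ 0) (hβ₄ : β₄ ≠ 0)
    (hγc : γc ≠ 0) :
    steadyStateGap β₁ β₂ β₃ β₄ a b γc T = 0 ↔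
      γc * (T + β₁) = β₄ * a * (1 - b * T) * (T ^ 2 + β₂ * T + β₃) := by
  rw [steadyStateGap, sub_eq_zero, one_div_mul_eq_div, div_div,
    div_eq_div_iff (mul_ne_zero hβ₄ hD) hγc]
  constructor <;> intro h <;> linear_combination h

theorem steadyStateGap_inv_pos (hb : 0 < b) (hβ₁ : 0 ≤ β₁) (hβ₂ : 0 ≤ β₂) (hβ₃ : 0 < β₃)
    (hβ₄ : 0 < β₄) : 0 < steadyStateGap β₁ β₂ β₃ β₄ a b γc (1 / b) := by
  rw [steadyStateGap, mul_one_div_cancel hb.ne', sub_self, mul_zero, zero_div, sub_zero]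
  positivity

theorem finite_steadyStateGap_eq_zero (hb : 0 < b) (hγc : 0 < γc) (hβ₁ : 0 ≤ β₁)
    (hβ₂ : 0 ≤ β₂) (hβ₃ : 0 < β₃) (hβ₄ : β₄ ≠ 0) :
    {T ∈ Icc 0 (1 / b) | steadyStateGap β₁ β₂ β₃ β₄ a b γc T = 0}.Finite := by
  set P : ℝ[X] := C γc * (X + C β₁) - C (β₄ * a) * (1 - C b * X) * (X ^ 2 + C β₂ * X + C β₃)
  have hP : ∀ T, P.eval T =
      γc * (T + β₁) - β₄ * a * (1 - b * T) * (T ^ 2 + β₂ * T + β₃) := by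
    intro T
    simp [P]
  have hP_ne : P ≠ 0 := by
    intro h0
    have hP_inv := hP (1 / b)
    rw [h0, eval_zero, mul_one_div_cancel hb.ne', sub_self, mul_zero, zero_mul, sub_zero] at hP_inv
    have : 0 < γc * (1 / b + β₁) := by positivity
    linarith
  refine (finite_setOfPred_isRoot hP_ne).subset fun T ⟨hT, hfT⟩ => ?_
  have hD : T ^ 2 + β₂ * T + β₃ ≠ 0 := by have := hT.1; positivity
  rw [steadyStateGap_eq_zero_iff hD hβ₄ hγc.ne'] at hfT
  simp only [mem_ofPred_eq, IsRoot, hP, hfT, sub_self]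

end SteadyStateGap

theorem stmt_3_general (a b γc se de αn kn g γe sn dn : ℝ)
    (hb : 0 < b) (hγc : 0 < γc) (hse : 0 < se) (hde : 0 < de)
    (hαn : 0 < αn) (hkn : 0 < kn) (hg : 0 < g) (hγe : 0 < γe) (hsn : 0 < sn) (hdn : 0 < dn)
    (hgrow : a > γc * se / de)
    (β₁ β₂ β₃ β₄ : ℝ)
    (hβ₁ : β₁ = dn * g * se / (se * (dn + kn) + αn * kn * sn))
    (hβ₂ : β₂ = (de * (dn + kn) + γe * dn * g) / (γe * (dn + kn)))
    (hβ₃ : β₃ = de * dn * g / (γe * (dn + kn)))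
    (hβ₄ : β₄ = γe * (dn + kn) / (se * (dn + kn) + αn * kn * sn))
    (hΔ : ∀ T ∈ Set.Icc (0 : ℝ) (1 / b),
      ((T + β₁) ^ 2 - (β₁ ^ 2 + β₃ - β₁ * β₂)) / (T ^ 2 + β₂ * T + β₃) ^ 2
        ≤ β₄ * (a * b / γc))
    (f₁ : ℝ → ℝ)
    (hf₁ : ∀ T, f₁ T = (1 / β₄) * (T + β₁) / (T ^ 2 + β₂ * T + β₃)) :
    ∃! T', T' ∈ Set.Ioo (0 : ℝ) (1 / b) ∧ f₁ T' = a * (1 - b * T') / γc := by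
  have hβ₁p : 0 ≤ β₁ := by rw [hβ₁]; positivity
  have hβ₂p : 0 ≤ β₂ := by rw [hβ₂]; positivity
  have hβ₃p : 0 < β₃ := by rw [hβ₃]; positivity
  have hβ₄p : 0 < β₄ := by rw [hβ₄]; positivity
  have hgap_zero : steadyStateGap β₁ β₂ β₃ β₄ a b γc 0 < 0 := by
    have hS : 0 < se * (dn + kn) + αn * kn * sn := by positivity
    have h0 : steadyStateGap β₁ β₂ β₃ β₄ a b γc 0 = se / de - a / γc := by
      simp only [steadyStateGap, hβ₁, hβ₃, hβ₄]
      field_simp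
      ring
    rw [h0, sub_neg, div_lt_div_iff₀ hde hγc]
    rw [gt_iff_lt, div_lt_iff₀ hde] at hgrow
    linarith
  have hroot : ∀ T, f₁ T = a * (1 - b * T) / γc ↔ steadyStateGap β₁ β₂ β₃ β₄ a b γc T = 0 :=
    fun T => by rw [hf₁, steadyStateGap, sub_eq_zero]
  simp_rw [hroot]
  exact existsUnique_mem_Ioo_eq_zero_of_monotoneOn (by positivity)
    ((continuousOn_steadyStateGap hβ₂p hβ₃p).mono Icc_subset_Ici_self)
    (monotoneOn_steadyStateGap hβ₂p hβ₃p hβ₄p hΔ) hgap_zero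
    (steadyStateGap_inv_pos hb hβ₁p hβ₂p hβ₃p hβ₄p)
    (finite_steadyStateGap_eq_zero hb hγc hβ₁p hβ₂p hβ₃p hβ₄p.ne')

theorem stmt_3 (a b γc se de αn kn g γe sn dn : ℝ)
    (ha : 0 < a) (hb : 0 < b) (hγc : 0 < γc) (hse : 0 < se) (hde : 0 < de)
    (hαn : 0 < αn) (hkn : 0 < kn) (hg : 0 < g) (hγe : 0 < γe) (hsn : 0 < sn) (hdn : 0 < dn)
    (hgrow : a > γc * se / de)
    (β₁ β₂ β₃ β₄ : ℝ)
    (hβ₁ : β₁ = dn * g * se / (se * (dn + kn) + αn * kn * sn))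
    (hβ₂ : β₂ = (de * (dn + kn) + γe * dn * g) / (γe * (dn + kn)))
    (hβ₃ : β₃ = de * dn * g / (γe * (dn + kn)))
    (hβ₄ : β₄ = γe * (dn + kn) / (se * (dn + kn) + αn * kn * sn))
    (hΔ : ∀ T ∈ Set.Icc (0 : ℝ) (1 / b),
      ((T + β₁) ^ 2 - (β₁ ^ 2 + β₃ - β₁ * β₂)) / (T ^ 2 + β₂ * T + β₃) ^ 2
        ≤ β₄ * (a * b / γc))
    (f₁ : ℝ → ℝ)
    (hf₁ : ∀ T, f₁ T = (1 / β₄) * (T + β₁) / (T ^ 2 + β₂ * T + β₃)) :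
    ∃! T', T' ∈ Set.Ioo (0 : ℝ) (1 / b) ∧ f₁ T' = a * (1 - b * T') / γc :=
  stmt_3_general a b γc se de αn kn g γe sn dn hb hγc hse hde hαn hkn hg hγe hsn hdn hgrow β₁ β₂ β₃
    β₄ hβ₁ hβ₂ hβ₃ hβ₄ hΔ f₁ hf₁
end
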